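/- arXiv:2208.14133 — 4 statements merged into one kernel-verified Lean document; each statement's English description precedes it below -/
import Mathlib

section
/- Let σ > 0, m ≥ 1, μ* ∈ ℝ, μ̂_PRE ∈ ℝ, and set d = μ̂_PRE − μ*. Let λ > 0 and β = λ/(λ+1). Let x₁,…,x_m be i.i.d. samples from the Gaussian N(μ*, σ²), let μ̂_MLE = (1/m)·Σᵢ xᵢ and μ̂_REG = (1/(1+λ))·μ̂_MLE + (λ/(1+λ))·μ̂_PRE. If max{(σ² − m·d²)/(σ² + m·d²), 0} < β < min{2σ²/(σ² + m·d²), 1}, then the mean squared error of μ̂_REG is strictly smaller than the minimum of the mean squared errors of μ̂_MLE and μ̂_PRE; that is, E[(μ̂_REG − μ*)²] < min{ E[(μ̂_MLE − μ*)²], (μ̂_PRE − μ*)² }, where the expectations are taken over the i.i.d. sample. -/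
/-!
Bias-variance decomposition. Under the product measure the coordinates are independent, so the
sample mean is unbiased with variance `σ² / m`. Since `μ̂_REG = (1 - β) μ̂_MLE + β μ̂_PRE`, its mean
squared error is `(1 - β)² σ² / m + β² d²`. This is below `σ² / m` iff `β (σ² + m d²) < 2 σ²`, and
below `d²` iff `σ² - m d² < β (σ² + m d²)`, which are the two bounds on `β`.
-/

open MeasureTheory ProbabilityTheory

section BiasVariance

variable {Ω : Type*} {mΩ : MeasurableSpace Ω} {μ : Measure Ω} [IsProbabilityMeasure μ]

lemma integral_sub_const_sq {X : Ω → ℝ} (hX : MemLp X 2 μ) (c : ℝ) :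
    ∫ ω, (X ω - c) ^ 2 ∂μ = Var[X; μ] + (μ[X] - c) ^ 2 := by
  have hXc : MemLp (fun ω => X ω - c) 2 μ := hX.sub (memLp_const c)
  rw [← variance_sub_const hX.aestronglyMeasurable c, variance_eq_sub hXc,
    integral_sub (hX.integrable one_le_two) (integrable_const c)]
  simp

lemma integral_shrinkage_sub_sq {X : Ω → ℝ} (hX : MemLp X 2 μ) {θ : ℝ} (hθ : μ[X] = θ)
    (β p : ℝ) :
    ∫ ω, ((1 - β) * X ω + β * p - θ) ^ 2 ∂μ =
      (1 - β) ^ 2 * Var[X; μ] + β ^ 2 * (p - θ) ^ 2 := by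
  have hY : MemLp (fun ω => (1 - β) * X ω + β * p) 2 μ := (hX.const_mul _).add (memLp_const _)
  rw [integral_sub_const_sq hY,
    variance_add_const (hX.const_mul _).aestronglyMeasurable, variance_const_mul,
    integral_add ((hX.integrable one_le_two).const_mul _) (integrable_const _),
    integral_const_mul, hθ]
  simp only [integral_const, probReal_univ, one_smul]
  ring

end BiasVariance

section SampleMean

variable {ι : Type*} [Fintype ι]

noncomputable def sampleMean (x : ι → ℝ) : ℝ := (1 / (Fintype.card ι : ℝ)) * ∑ i, x i

variable {ν : Measure ℝ} [IsProbabilityMeasure ν]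

lemma memLp_sampleMean_pi (hν : MemLp id 2 ν) :
    MemLp (sampleMean (ι := ι)) 2 (Measure.pi fun _ => ν) := by
  unfold sampleMean
  refine MemLp.const_mul ?_ _
  exact memLp_finsetSum _ fun i _ =>
    hν.comp_measurePreserving (measurePreserving_eval (fun _ : ι => ν) i)

lemma integral_sampleMean_pi [Nonempty ι] (hν : Integrable id ν) :
    ∫ x, sampleMean x ∂(Measure.pi fun _ : ι => ν) = ∫ t, t ∂ν := by
  unfold sampleMean
  rw [integral_const_mul,
    integral_finsetSum (f := fun i (x : ι → ℝ) => x i) _ fun i _ => integrable_eval hν]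
  simp only [integral_eval, Finset.sum_const, Finset.card_univ, nsmul_eq_mul]
  field_simp

lemma variance_sampleMean_pi (hν : MemLp id 2 ν) :
    Var[sampleMean; Measure.pi fun _ : ι => ν] = Var[id; ν] / Fintype.card ι := by
  unfold sampleMean
  rw [variance_const_mul]
  have hsum := variance_sum_pi (μ := fun _ : ι => ν) (X := fun _ => id) fun _ => hν
  simp only [Finset.sum_fn, id, Finset.sum_const, Finset.card_univ, nsmul_eq_mul] at hsum
  rw [hsum]
  field_simp

end SampleMean

lemma shrinkage_mse_lt_min {v n d β : ℝ} (hv : 0 < v) (hn : 0 < n)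
    (hlow : max ((v - n * d ^ 2) / (v + n * d ^ 2)) 0 < β)
    (hhigh : β < min (2 * v / (v + n * d ^ 2)) 1) :
    (1 - β) ^ 2 * (v / n) + β ^ 2 * d ^ 2 < min (v / n) (d ^ 2) := by
  have hden : 0 < v + n * d ^ 2 := by positivity
  obtain ⟨hlow, hβ0⟩ := max_lt_iff.mp hlow
  obtain ⟨hhigh, hβ1⟩ := lt_min_iff.mp hhigh
  rw [div_lt_iff₀ hden] at hlow
  rw [lt_div_iff₀ hden] at hhigh
  rw [lt_min_iff, ← sub_pos, ← sub_pos (b := _ + _)]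
  constructor
  · have hgap : 0 < 2 * v - β * (v + n * d ^ 2) := by linarith
    have : v / n - ((1 - β) ^ 2 * (v / n) + β ^ 2 * d ^ 2) =
        β * (2 * v - β * (v + n * d ^ 2)) / n := by
      field_simp; ring
    rw [this]
    positivity
  · have hgap : 0 < β * (v + n * d ^ 2) - (v - n * d ^ 2) := by linarith
    have hβ1' : 0 < 1 - β := by linarith
    have : d ^ 2 - ((1 - β) ^ 2 * (v / n) + β ^ 2 * d ^ 2) =
        (1 - β) * (β * (v + n * d ^ 2) - (v - n * d ^ 2)) / n := by
      field_simp; ring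
    rw [this]
    positivity

/-- Proposition 1 (Gaussian-fitting example): with an i.i.d. sample
`x₁,…,x_m ∼ N(μ*, σ²)`, `μ̂_MLE` the sample mean and
`μ̂_REG = (1/(1+λ))·μ̂_MLE + (λ/(1+λ))·μ̂_PRE`, if the normalized weight
`β = λ/(λ+1)` satisfies
`max{(σ² − m·d²)/(σ² + m·d²), 0} < β < min{2σ²/(σ² + m·d²), 1}` with
`d = μ̂_PRE − μ*`, then
`MSE[μ̂_REG] < min{MSE[μ̂_MLE], MSE[μ̂_PRE]}`. -/
theorem stmt_0 (σ : ℝ) (hσ : 0 < σ) (m : ℕ) (hm : 1 ≤ m)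
    (μstar μPRE : ℝ) (d : ℝ) (hd : d = μPRE - μstar)
    (lam : ℝ) (hlam : 0 < lam) (β : ℝ) (hβ : β = lam / (lam + 1))
    (P : Measure (Fin m → ℝ))
    (hP : P = Measure.pi fun _ : Fin m => gaussianReal μstar ⟨σ ^ 2, sq_nonneg σ⟩)
    (μMLE μREG : (Fin m → ℝ) → ℝ)
    (hMLE : ∀ x : Fin m → ℝ, μMLE x = (1 / (m : ℝ)) * ∑ i : Fin m, x i)
    (hREG : ∀ x : Fin m → ℝ,
      μREG x = (1 / (1 + lam)) * μMLE x + (lam / (1 + lam)) * μPRE)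
    (hlow : max ((σ ^ 2 - m * d ^ 2) / (σ ^ 2 + m * d ^ 2)) 0 < β)
    (hhigh : β < min (2 * σ ^ 2 / (σ ^ 2 + m * d ^ 2)) 1) :
    ∫ x, (μREG x - μstar) ^ 2 ∂P
      < min (∫ x, (μMLE x - μstar) ^ 2 ∂P) ((μPRE - μstar) ^ 2) := by
  obtain ⟨v, hvσ, hPv⟩ : ∃ v : NNReal, (v : ℝ) = σ ^ 2 ∧
      P = Measure.pi fun _ : Fin m => gaussianReal μstar v := ⟨_, rfl, hP⟩
  have hν : MemLp id 2 (gaussianReal μstar v) := memLp_id_gaussianReal 2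
  have : Nonempty (Fin m) := ⟨⟨0, hm⟩⟩
  have : IsProbabilityMeasure P := hPv ▸ inferInstance
  have hX : MemLp sampleMean 2 P := hPv ▸ memLp_sampleMean_pi hν
  have hmean : ∫ x, sampleMean x ∂P = μstar := by
    rw [hPv, integral_sampleMean_pi (hν.integrable one_le_two), integral_id_gaussianReal]
  have hvar : Var[sampleMean; P] = σ ^ 2 / m := by
    rw [hPv, variance_sampleMean_pi hν, variance_id_gaussianReal, Fintype.card_fin, hvσ]
  have hMLE_mean : μMLE = sampleMean := funext fun x => by simp [hMLE, sampleMean]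
  have hREG_shrink : ∀ x, μREG x = (1 - β) * sampleMean x + β * μPRE := fun x => by
    rw [hREG, hMLE_mean, hβ]
    field_simp
    ring
  simp_rw [hREG_shrink, hMLE_mean]
  rw [integral_sub_const_sq hX, integral_shrinkage_sub_sq hX hmean, hmean, hvar, sub_self,
    zero_pow two_ne_zero, add_zero, ← hd]
  exact shrinkage_mse_lt_min (by positivity) (by exact_mod_cast hm) hlow hhigh
end

section
/- Let σ > 0, m ≥ 1, μ* ∈ ℝ, μ̂_PRE ∈ ℝ, d = μ̂_PRE − μ*, λ > 0, and β = λ/(λ+1). Let x₁,…,x_m be i.i.d. from N(μ*, σ²), μ̂_MLE = (1/m)·Σᵢ xᵢ, and μ̂_REG = (1/(1+λ))·μ̂_MLE + (λ/(1+λ))·μ̂_PRE. Define the expected risk R(μ̂) = E_{x∼N(μ*,σ²)}[−log φ_{μ̂,σ²}(x)], where φ_{a,σ²} is the density of N(a, σ²). If max{(σ² − m·d²)/(σ² + m·d²), 0} < β < min{2σ²/(σ² + m·d²), 1}, then E_S[R(μ̂_REG)] < min{ E_S[R(μ̂_MLE)], E_S[R(μ̂_PRE)] }, where E_S is expectation over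 the i.i.d. sample. -/
open MeasureTheory ProbabilityTheory

/-!
Against data from `N(μ*, σ²)`, the cross-entropy risk of `N(a, σ²)` is
`log √(2πσ²) + 1/2 + (a - μ*)² / (2σ²)`, so comparing expected risks of estimators amounts to
comparing their mean squared errors `Var + bias²`. The sample mean has mean squared error `σ²/m`,
the constant `μ̂_PRE` has `d²`, and `μ̂_REG = (1 - β) μ̂_MLE + β μ̂_PRE` has
`(1 - β)² σ²/m + β² d²`. The two bounds on `β` say exactly that the last quantity is below each
of the other two.
-/

open Real NNReal

section BiasVariance

variable {Ω : Type*} [MeasurableSpace Ω] {P : Measure Ω} [IsProbabilityMeasure P] {X : Ω → ℝ}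

lemma integral_sub_sq_eq_variance_add_sq (hX : MemLp X 2 P) (c : ℝ) :
    ∫ ω, (X ω - c) ^ 2 ∂P = Var[X; P] + (P[X] - c) ^ 2 := by
  have hXc : MemLp (fun ω => X ω - c) 2 P := hX.sub (memLp_const c)
  rw [← variance_sub_const hX.aestronglyMeasurable c, variance_eq_sub hXc,
    integral_sub (hX.integrable one_le_two) (integrable_const c)]
  simp

lemma integral_const_add_sub_sq_div (hX : MemLp X 2 P) (K c w : ℝ) :
    ∫ ω, (K + (X ω - c) ^ 2 / w) ∂P = K + (Var[X; P] + (P[X] - c) ^ 2) / w := by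
  have hXc : MemLp (fun ω => X ω - c) 2 P := hX.sub (memLp_const c)
  rw [integral_add (integrable_const K) (hXc.integrable_sq.div_const w),
    integral_div, integral_sub_sq_eq_variance_add_sq hX]
  simp

lemma integral_const_add_affine_sub_sq_div (hX : MemLp X 2 P) (K a b c w : ℝ) :
    ∫ ω, (K + (a * X ω + b - c) ^ 2 / w) ∂P
      = K + (a ^ 2 * Var[X; P] + (a * P[X] + b - c) ^ 2) / w := by
  have hY : MemLp (fun ω => a * X ω + b) 2 P := (hX.const_mul a).add (memLp_const b)
  rw [integral_const_add_sub_sq_div hY, variance_add_const (hX.const_mul a).aestronglyMeasurable,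
    variance_const_mul, integral_add ((hX.integrable one_le_two).const_mul a) (integrable_const b),
    integral_const_mul]
  simp

end BiasVariance

lemma neg_log_gaussianPDFReal (a : ℝ) {v : ℝ≥0} (hv : v ≠ 0) (x : ℝ) :
    -log (gaussianPDFReal a v x) = log √(2 * π * v) + (x - a) ^ 2 / (2 * v) := by
  have : 0 < √(2 * π * v) := Real.sqrt_pos.mpr (by positivity)
  rw [gaussianPDFReal, log_mul (by positivity) (exp_ne_zero _), log_inv, log_exp]
  ring

lemma integral_neg_log_gaussianPDFReal (μ a : ℝ) {v : ℝ≥0} (hv : v ≠ 0) :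
    ∫ x, -log (gaussianPDFReal a v x) ∂gaussianReal μ v
      = log √(2 * π * v) + 1 / 2 + (a - μ) ^ 2 / (2 * v) := by
  have hv' : (v : ℝ) ≠ 0 := by exact_mod_cast hv
  simp_rw [neg_log_gaussianPDFReal a hv]
  rw [integral_const_add_sub_sq_div (X := fun x => x) (memLp_id_gaussianReal 2),
    variance_fun_id_gaussianReal, integral_id_gaussianReal]
  field_simp
  ring

section SampleSum

variable {ι : Type*} [Fintype ι] {ν : Measure ℝ} [IsProbabilityMeasure ν]

lemma memLp_sum_coord_pi (hν : MemLp id 2 ν) :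
    MemLp (fun x : ι → ℝ => ∑ i, x i) 2 (Measure.pi fun _ => ν) :=
  memLp_finsetSum _ fun i _ => hν.comp_measurePreserving (measurePreserving_eval _ i)

lemma integral_sum_coord_pi (hν : Integrable id ν) :
    ∫ x : ι → ℝ, ∑ i, x i ∂Measure.pi (fun _ => ν) = Fintype.card ι * ∫ y, y ∂ν := by
  rw [integral_finsetSum (f := fun i (x : ι → ℝ) => x i) _ fun i _ => integrable_eval hν]
  simp [integral_eval]

lemma variance_sum_coord_pi (hν : MemLp id 2 ν) :
    Var[fun x : ι → ℝ => ∑ i, x i; Measure.pi fun _ => ν] = Fintype.card ι * Var[id; ν] := by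
  have := variance_sum_pi (μ := fun _ : ι => ν) (X := fun _ => id) fun _ => hν
  simp only [Finset.sum_const, Finset.card_univ, nsmul_eq_mul] at this
  rw [← this]
  congr 1
  ext x
  simp

lemma integral_const_add_affine_sum_sub_sq_div_gaussianReal_pi (μ : ℝ) (v : ℝ≥0)
    (K a b c w : ℝ) :
    ∫ x : ι → ℝ, (K + (a * ∑ i, x i + b - c) ^ 2 / w) ∂Measure.pi (fun _ => gaussianReal μ v)
      = K + (a ^ 2 * (Fintype.card ι * v) + (a * (Fintype.card ι * μ) + b - c) ^ 2) / w := by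
  have hν : MemLp id 2 (gaussianReal μ v) := memLp_id_gaussianReal 2
  rw [integral_const_add_affine_sub_sq_div (memLp_sum_coord_pi hν), variance_sum_coord_pi hν,
    integral_sum_coord_pi (hν.integrable one_le_two), variance_id_gaussianReal,
    integral_id_gaussianReal]

end SampleSum

lemma one_sub_sq_mul_add_sq_mul_lt_min {s t β : ℝ} (hs : 0 < s) (ht : 0 ≤ t)
    (hlow : max ((s - t) / (s + t)) 0 < β) (hhigh : β < min (2 * s / (s + t)) 1) :
    (1 - β) ^ 2 * s + β ^ 2 * t < min s t := by
  have hst : 0 < s + t := by positivity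
  obtain ⟨hlow, hβ₀⟩ := max_lt_iff.mp hlow
  obtain ⟨hhigh, hβ₁⟩ := lt_min_iff.mp hhigh
  rw [div_lt_iff₀ hst] at hlow
  rw [lt_div_iff₀ hst] at hhigh
  refine lt_min ?_ ?_
  · nlinarith [mul_lt_mul_of_pos_left hhigh hβ₀]
  · nlinarith [mul_lt_mul_of_pos_left hlow (sub_pos.mpr hβ₁)]

/-- Corollary (expected risk version of Proposition 1): in the Gaussian-fitting
example, with expected risk `R(a) = E_{x∼N(μ*,σ²)}[−log φ_{a,σ²}(x)]`, if the
normalized weight `β = λ/(λ+1)` lies in the admissible interval, then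
`E_S[R(μ̂_REG)] < min{E_S[R(μ̂_MLE)], E_S[R(μ̂_PRE)]}`. -/
theorem stmt_9 (σ : ℝ) (hσ : 0 < σ) (m : ℕ) (hm : 1 ≤ m)
    (μstar μPRE : ℝ) (d : ℝ) (hd : d = μPRE - μstar)
    (lam : ℝ) (hlam : 0 < lam) (β : ℝ) (hβ : β = lam / (lam + 1))
    (P : Measure (Fin m → ℝ))
    (hP : P = Measure.pi fun _ : Fin m => gaussianReal μstar ⟨σ ^ 2, sq_nonneg σ⟩)
    (μMLE μREG : (Fin m → ℝ) → ℝ)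
    (hMLE : ∀ x : Fin m → ℝ, μMLE x = (1 / (m : ℝ)) * ∑ i : Fin m, x i)
    (hREG : ∀ x : Fin m → ℝ,
      μREG x = (1 / (1 + lam)) * μMLE x + (lam / (1 + lam)) * μPRE)
    (R : ℝ → ℝ)
    (hR : ∀ a : ℝ, R a =
      ∫ x, -Real.log (gaussianPDFReal a ⟨σ ^ 2, sq_nonneg σ⟩ x)
        ∂(gaussianReal μstar ⟨σ ^ 2, sq_nonneg σ⟩))
    (hlow : max ((σ ^ 2 - m * d ^ 2) / (σ ^ 2 + m * d ^ 2)) 0 < β)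
    (hhigh : β < min (2 * σ ^ 2 / (σ ^ 2 + m * d ^ 2)) 1) :
    ∫ s, R (μREG s) ∂P < min (∫ s, R (μMLE s) ∂P) (R μPRE) := by
  -- Naming the variance lets `rw` see `⟨σ ^ 2, _⟩` as an `ℝ≥0` rather than a bare subtype.
  set v : ℝ≥0 := ⟨σ ^ 2, sq_nonneg σ⟩
  have hvσ : (v : ℝ) = σ ^ 2 := rfl
  have hv : (0 : ℝ) < v := pow_pos hσ 2
  have hm0 : (0 : ℝ) < m := by exact_mod_cast hm
  set K := log √(2 * π * v) + 1 / 2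
  have hR' : R = fun a => K + (a - μstar) ^ 2 / (2 * v) := by
    funext a
    rw [hR, integral_neg_log_gaussianPDFReal μstar a (NNReal.coe_ne_zero.mp hv.ne')]
  have hMLE' : μMLE = fun s : Fin m → ℝ => 1 / m * ∑ i, s i + 0 := by
    funext s; simp [hMLE]
  have hREG' : μREG = fun s : Fin m → ℝ => (1 - β) / m * ∑ i, s i + β * μPRE := by
    funext s; rw [hREG, hMLE, hβ]; field_simp; ring
  rw [← hvσ] at hlow hhigh
  have hmse := one_sub_sq_mul_add_sq_mul_lt_min hv (by positivity) hlow hhigh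
  subst hP hd
  rw [hMLE', hREG', hR']
  simp only [integral_const_add_affine_sum_sub_sq_div_gaussianReal_pi, Fintype.card_fin]
  calc _ = K + ((1 - β) ^ 2 * v + β ^ 2 * (m * (μPRE - μstar) ^ 2)) / (2 * v * m) := by
        field_simp; ring
    _ < K + min (v : ℝ) (m * (μPRE - μstar) ^ 2) / (2 * v * m) := by gcongr
    _ = _ := by
        rw [← min_div_div_right (by positivity), ← min_add_add_left]
        congr 2 <;> field_simp; ring
end

section
/- Let X be a compact metric space, let p_d be a Borel probability measure on X, let E_f : X → ℝ be continuous, and let λ > 0. Then the functional μ ↦ KL(p_d ‖ μ) + λ·∫_X E_f dμ, defined on the set of all Borel probability measures on X with values in [0, ∞], attains its infimum; i.e., there exists a Borel probability measure μ* on X minimizing the functional. -/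
/-!
The minimizer can be written down. Let `x₀` minimize `λ E_f` and put `h = λ E_f + c`, where
`c ≥ -λ E_f(x₀)` is chosen so that `∫ 1/h dp_d ≤ 1`, with equality unless `h(x₀) = 0`
(intermediate value theorem, plus monotone convergence as `c` decreases to `-λ E_f(x₀)`). Then
`μ⋆ = p_d / h + (1 - ∫ 1/h dp_d) δ_{x₀}` is a probability measure with `dp_d/dμ⋆ = h` and
`∫ h dμ⋆ = 1`. For any `μ ≫ p_d`, integrating `log y ≤ y - 1` at `y = h / (dp_d/dμ)` gives
`∫ log h dp_d + 1 ≤ KL(p_d ‖ μ) + ∫ h dμ`, with equality at `μ⋆`. On probability measures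
`∫ h dμ = λ ∫ E_f dμ + c`, so `μ⋆` minimizes the functional.
-/

open MeasureTheory
open scoped Classical

/-- The Kullback–Leibler divergence `KL(p ‖ q)`, equal to `∫ log(dp/dq) dp`
when `p ≪ q` (and this log-likelihood ratio is integrable), and `+∞`
otherwise. -/
noncomputable def klDiv {α : Type*} [MeasurableSpace α] (p q : Measure α) : EReal :=
  if p ≪ q ∧ Integrable (llr p q) p then ((∫ x, llr p q x ∂p : ℝ) : EReal) else ⊤

open Real Filter Set
open scoped ENNReal Topology

lemma Real.abs_log_le_add_inv {t : ℝ} (ht : 0 < t) : |log t| ≤ t + t⁻¹ :=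
  abs_le.2 ⟨by linarith [one_sub_inv_le_log_of_pos ht, ht.le],
    by linarith [log_le_sub_one_of_pos ht, inv_pos.2 ht]⟩

namespace MeasureTheory

variable {X : Type*} [MeasurableSpace X]

lemma ofReal_integral_le_lintegral_ofReal {μ : Measure X} {f : X → ℝ} (hf : Integrable f μ) :
    ENNReal.ofReal (∫ x, f x ∂μ) ≤ ∫⁻ x, ENNReal.ofReal (f x) ∂μ := by
  refine le_trans (ENNReal.ofReal_le_ofReal ?_) ENNReal.ofReal_toReal_le
  rw [integral_eq_lintegral_pos_part_sub_lintegral_neg_part hf]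
  exact sub_le_self _ ENNReal.toReal_nonneg

lemma Integrable.log_of_integrable_inv {μ : Measure X} {h : X → ℝ} (hh : Integrable h μ)
    (hinv : Integrable (fun x ↦ (h x)⁻¹) μ) (hpos : ∀ᵐ x ∂μ, 0 < h x) :
    Integrable (fun x ↦ log (h x)) μ := by
  refine (hh.add hinv).mono'
    (measurable_log.comp_aemeasurable hh.aemeasurable).aestronglyMeasurable ?_
  filter_upwards [hpos] with x hx
  exact abs_log_le_add_inv hx

/-- Gibbs' variational inequality: `log y ≤ y - 1` applied to `y = h / (dp/dμ)`. -/
lemma integral_log_le_integral_llr_add_integral_sub_one {p μ : Measure X}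
    [IsProbabilityMeasure p] [SigmaFinite μ] (hpμ : p ≪ μ) (hllr : Integrable (llr p μ) p)
    {h : X → ℝ} (hm : Measurable h) (hpos : ∀ᵐ x ∂p, 0 < h x)
    (hlog : Integrable (fun x ↦ log (h x)) p) (hint : Integrable h μ) (h0 : 0 ≤ᵐ[μ] h) :
    ∫ x, log (h x) ∂p ≤ ∫ x, llr p μ x ∂p + ∫ x, h x ∂μ - 1 := by
  set φ : X → ℝ := fun x ↦ log (h x) - llr p μ x + 1
  have hφ : Integrable φ p := (hlog.sub hllr).add (integrable_const 1)
  have pointwise :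
      ∀ᵐ x ∂p, ENNReal.ofReal (φ x) ≤ ENNReal.ofReal (h x) / p.rnDeriv μ x := by
    filter_upwards [hpos, Measure.rnDeriv_pos hpμ, hpμ.ae_le (Measure.rnDeriv_lt_top p μ)]
      with x hx hg0 hgtop
    have ht : 0 < (p.rnDeriv μ x).toReal := ENNReal.toReal_pos hg0.ne' hgtop.ne
    rw [← ENNReal.ofReal_toReal hgtop.ne, ← ENNReal.ofReal_div_of_pos ht]
    refine ENNReal.ofReal_le_ofReal ?_
    have := log_le_sub_one_of_pos (div_pos hx ht)
    rw [log_div hx.ne' ht.ne'] at this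
    simp only [φ, llr]
    linarith
  have hrn :
      ∫⁻ x, ENNReal.ofReal (h x) / p.rnDeriv μ x ∂p ≤ ∫⁻ x, ENNReal.ofReal (h x) ∂μ := by
    rw [← lintegral_rnDeriv_mul hpμ (by fun_prop)]
    exact lintegral_mono fun x ↦ ENNReal.mul_div_le
  have key : ENNReal.ofReal (∫ x, φ x ∂p) ≤ ENNReal.ofReal (∫ x, h x ∂μ) :=
    calc ENNReal.ofReal (∫ x, φ x ∂p)
        ≤ ∫⁻ x, ENNReal.ofReal (φ x) ∂p := ofReal_integral_le_lintegral_ofReal hφ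
      _ ≤ ∫⁻ x, ENNReal.ofReal (h x) / p.rnDeriv μ x ∂p := lintegral_mono_ae pointwise
      _ ≤ ∫⁻ x, ENNReal.ofReal (h x) ∂μ := hrn
      _ = ENNReal.ofReal (∫ x, h x ∂μ) := (ofReal_integral_eq_lintegral_ofReal hint h0).symm
  have hφ_eq : ∫ x, φ x ∂p = ∫ x, log (h x) ∂p - ∫ x, llr p μ x ∂p + 1 := by
    simp only [φ]
    have hsub : Integrable (fun x ↦ log (h x) - llr p μ x) p := hlog.sub hllr
    rw [integral_add hsub (integrable_const 1), integral_sub hlog hllr]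
    simp
  have := (ENNReal.ofReal_le_ofReal_iff (integral_nonneg_of_ae h0)).1 key
  linarith

lemma Measure.withDensity_dirac {f : X → ℝ≥0∞} (hf : Measurable f) (x₀ : X) :
    (dirac x₀).withDensity f = f x₀ • dirac x₀ := by
  ext s hs
  by_cases hx : x₀ ∈ s <;> simp [withDensity_apply _ hs, setLIntegral_dirac' hf hs, hx,
    Measure.dirac_apply' _ hs]

section InvDensityMeasure

/-- The atom carries the mass that `p / h` lacks; sitting at a zero of `h`, it changes neither
`dp/dμ` nor `∫ h dμ`. -/
noncomputable def invDensityMeasure (p : Measure X) (h : X → ℝ) (x₀ : X) : Measure X :=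
  p.withDensity (fun x ↦ (ENNReal.ofReal (h x))⁻¹) +
    (1 - ∫⁻ x, (ENNReal.ofReal (h x))⁻¹ ∂p) • Measure.dirac x₀

variable {p : Measure X} {h : X → ℝ} {x₀ : X}

lemma isProbabilityMeasure_invDensityMeasure
    (hZ : ∫⁻ x, (ENNReal.ofReal (h x))⁻¹ ∂p ≤ 1) :
    IsProbabilityMeasure (invDensityMeasure p h x₀) := by
  constructor
  simp [invDensityMeasure, add_tsub_cancel_of_le hZ]

lemma ae_pos_of_lintegral_inv_ne_top (hm : Measurable h)
    (hZ : ∫⁻ x, (ENNReal.ofReal (h x))⁻¹ ∂p ≠ ∞) : ∀ᵐ x ∂p, 0 < h x := by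
  filter_upwards [ae_lt_top (by fun_prop) hZ] with x hx
  simpa using hx

lemma integrable_inv_of_lintegral_inv_ne_top (hm : Measurable h) (h0 : ∀ x, 0 ≤ h x)
    (hZ : ∫⁻ x, (ENNReal.ofReal (h x))⁻¹ ∂p ≠ ∞) : Integrable (fun x ↦ (h x)⁻¹) p := by
  refine (integrable_toReal_of_lintegral_ne_top (by fun_prop) hZ).congr
    (ae_of_all _ fun x ↦ ?_)
  simp [ENNReal.toReal_inv, ENNReal.toReal_ofReal (h0 x)]

lemma withDensity_invDensityMeasure (hm : Measurable h)
    (hZ : ∫⁻ x, (ENNReal.ofReal (h x))⁻¹ ∂p ≤ 1)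
    (hx₀ : h x₀ = 0 ∨ ∫⁻ x, (ENNReal.ofReal (h x))⁻¹ ∂p = 1) :
    (invDensityMeasure p h x₀).withDensity (fun x ↦ ENNReal.ofReal (h x)) = p := by
  have hpos := ae_pos_of_lintegral_inv_ne_top hm (hZ.trans_lt ENNReal.one_lt_top).ne
  have hcancel :
      ((fun x ↦ (ENNReal.ofReal (h x))⁻¹) * fun x ↦ ENNReal.ofReal (h x)) =ᵐ[p] 1 := by
    filter_upwards [hpos] with x hx
    exact ENNReal.inv_mul_cancel (by simpa using hx) ENNReal.ofReal_ne_top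
  have hatom : (1 - ∫⁻ x, (ENNReal.ofReal (h x))⁻¹ ∂p) * ENNReal.ofReal (h x₀) = 0 := by
    rcases hx₀ with hx₀ | hx₀ <;> simp [hx₀]
  rw [invDensityMeasure, withDensity_add_measure, withDensity_smul_measure,
    ← withDensity_mul _ (by fun_prop) (by fun_prop), withDensity_congr_ae hcancel,
    withDensity_one, Measure.withDensity_dirac (by fun_prop), smul_smul, hatom, zero_smul,
    add_zero]

lemma absolutelyContinuous_invDensityMeasure (hm : Measurable h)
    (hZ : ∫⁻ x, (ENNReal.ofReal (h x))⁻¹ ∂p ≤ 1)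
    (hx₀ : h x₀ = 0 ∨ ∫⁻ x, (ENNReal.ofReal (h x))⁻¹ ∂p = 1) :
    p ≪ invDensityMeasure p h x₀ := by
  simpa only [withDensity_invDensityMeasure hm hZ hx₀] using
    withDensity_absolutelyContinuous (invDensityMeasure p h x₀) fun x ↦ ENNReal.ofReal (h x)

lemma llr_invDensityMeasure (hm : Measurable h) (h0 : ∀ x, 0 ≤ h x)
    (hZ : ∫⁻ x, (ENNReal.ofReal (h x))⁻¹ ∂p ≤ 1)
    (hx₀ : h x₀ = 0 ∨ ∫⁻ x, (ENNReal.ofReal (h x))⁻¹ ∂p = 1) :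
    llr p (invDensityMeasure p h x₀) =ᵐ[p] fun x ↦ log (h x) := by
  have := isProbabilityMeasure_invDensityMeasure (x₀ := x₀) hZ
  have hrn := Measure.rnDeriv_withDensity (invDensityMeasure p h x₀)
    (f := fun x ↦ ENNReal.ofReal (h x)) (by fun_prop)
  rw [withDensity_invDensityMeasure hm hZ hx₀] at hrn
  filter_upwards [absolutelyContinuous_invDensityMeasure hm hZ hx₀ |>.ae_le hrn] with x hx
  rw [llr, hx, ENNReal.toReal_ofReal (h0 x)]

lemma integral_invDensityMeasure [IsProbabilityMeasure p] (hm : Measurable h)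
    (h0 : ∀ x, 0 ≤ h x)
    (hZ : ∫⁻ x, (ENNReal.ofReal (h x))⁻¹ ∂p ≤ 1)
    (hx₀ : h x₀ = 0 ∨ ∫⁻ x, (ENNReal.ofReal (h x))⁻¹ ∂p = 1) :
    ∫ x, h x ∂(invDensityMeasure p h x₀) = 1 := by
  rw [integral_eq_lintegral_of_nonneg_ae (ae_of_all _ h0) hm.aestronglyMeasurable,
    ← setLIntegral_univ, ← withDensity_apply _ MeasurableSet.univ,
    withDensity_invDensityMeasure hm hZ hx₀]
  simp

lemma integrable_llr_invDensityMeasure (hm : Measurable h) (h0 : ∀ x, 0 ≤ h x)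
    (hZ : ∫⁻ x, (ENNReal.ofReal (h x))⁻¹ ∂p ≤ 1)
    (hx₀ : h x₀ = 0 ∨ ∫⁻ x, (ENNReal.ofReal (h x))⁻¹ ∂p = 1) (hp : Integrable h p) :
    Integrable (llr p (invDensityMeasure p h x₀)) p := by
  have hZ' := (hZ.trans_lt ENNReal.one_lt_top).ne
  refine (hp.log_of_integrable_inv (integrable_inv_of_lintegral_inv_ne_top hm h0 hZ')
    (ae_pos_of_lintegral_inv_ne_top hm hZ')).congr ?_
  exact (llr_invDensityMeasure hm h0 hZ hx₀).symm

theorem integral_llr_add_integral_invDensityMeasure_le [IsProbabilityMeasure p]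
    (hm : Measurable h) (h0 : ∀ x, 0 ≤ h x)
    (hZ : ∫⁻ x, (ENNReal.ofReal (h x))⁻¹ ∂p ≤ 1)
    (hx₀ : h x₀ = 0 ∨ ∫⁻ x, (ENNReal.ofReal (h x))⁻¹ ∂p = 1) (hp : Integrable h p)
    {μ : Measure X} [SigmaFinite μ] (hpμ : p ≪ μ) (hllr : Integrable (llr p μ) p)
    (hμ : Integrable h μ) :
    ∫ x, llr p (invDensityMeasure p h x₀) x ∂p + ∫ x, h x ∂(invDensityMeasure p h x₀)
      ≤ ∫ x, llr p μ x ∂p + ∫ x, h x ∂μ := by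
  have hZ' := (hZ.trans_lt ENNReal.one_lt_top).ne
  have hpos := ae_pos_of_lintegral_inv_ne_top hm hZ'
  have hlog := hp.log_of_integrable_inv (integrable_inv_of_lintegral_inv_ne_top hm h0 hZ') hpos
  rw [integral_congr_ae (llr_invDensityMeasure hm h0 hZ hx₀),
    integral_invDensityMeasure hm h0 hZ hx₀]
  linarith [integral_log_le_integral_llr_add_integral_sub_one hpμ hllr hm hpos hlog hμ
    (ae_of_all _ h0)]

end InvDensityMeasure

section Shift

variable {p : Measure X} {g : X → ℝ}

lemma tendsto_lintegral_inv_add_one_div (hg : Measurable g) :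
    Tendsto (fun n : ℕ ↦ ∫⁻ x, (ENNReal.ofReal (g x + 1 / (n + 1)))⁻¹ ∂p) atTop
      (𝓝 (∫⁻ x, (ENNReal.ofReal (g x))⁻¹ ∂p)) := by
  refine lintegral_tendsto_of_tendsto_of_monotone (fun n ↦ by fun_prop)
    (ae_of_all _ fun x m n hmn ↦ ?_) (ae_of_all _ fun x ↦ ?_)
  · exact ENNReal.inv_le_inv.2 (ENNReal.ofReal_le_ofReal
      (add_le_add_right (Nat.one_div_le_one_div hmn) _))
  · have hcont : Continuous fun t : ℝ ↦ (ENNReal.ofReal t)⁻¹ :=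
      continuous_inv.comp ENNReal.continuous_ofReal
    have := (tendsto_const_nhds (x := g x)).add tendsto_one_div_add_atTop_nhds_zero_nat
    rw [add_zero] at this
    exact (hcont.tendsto (g x)).comp this

lemma lintegral_inv_add_eq_ofReal_integral [IsFiniteMeasure p] (hg : Measurable g)
    (hg0 : ∀ x, 0 ≤ g x) {c : ℝ} (hc : 0 < c) :
    ∫⁻ x, (ENNReal.ofReal (g x + c))⁻¹ ∂p = ENNReal.ofReal (∫ x, (g x + c)⁻¹ ∂p) := by
  have hpos : ∀ x, 0 < g x + c := fun x ↦ by linarith [hg0 x]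
  have hbdd : ∀ x, ‖(g x + c)⁻¹‖ ≤ c⁻¹ := fun x ↦ by
    rw [norm_inv, Real.norm_of_nonneg (hpos x).le]
    exact inv_anti₀ hc (by linarith [hg0 x])
  rw [ofReal_integral_eq_lintegral_ofReal
    ((integrable_const c⁻¹).mono' (by fun_prop) (ae_of_all _ hbdd))
    (ae_of_all _ fun x ↦ (inv_pos.2 (hpos x)).le)]
  simp_rw [ENNReal.ofReal_inv_of_pos (hpos _)]

lemma continuousOn_integral_inv_add [IsFiniteMeasure p] (hg : Measurable g)
    (hg0 : ∀ x, 0 ≤ g x) {a : ℝ} (ha : 0 < a) :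
    ContinuousOn (fun c ↦ ∫ x, (g x + c)⁻¹ ∂p) (Ici a) := by
  refine continuousOn_of_dominated (bound := fun _ ↦ a⁻¹) (fun c _ ↦ by fun_prop)
    (fun c hc ↦ ae_of_all _ fun x ↦ ?_) (integrable_const _) (ae_of_all _ fun x ↦ ?_)
  · have : a ≤ g x + c := by linarith [hg0 x, mem_Ici.1 hc]
    rw [norm_inv, Real.norm_of_nonneg (ha.le.trans this)]
    exact inv_anti₀ ha this
  · exact (continuousOn_const.add continuousOn_id).inv₀ fun c hc ↦
      (add_pos_of_nonneg_of_pos (hg0 x) (ha.trans_le hc)).ne'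

lemma exists_lintegral_inv_add_le_one [IsProbabilityMeasure p] (hg : Measurable g)
    (hg0 : ∀ x, 0 ≤ g x) :
    ∃ c, 0 ≤ c ∧ ∫⁻ x, (ENNReal.ofReal (g x + c))⁻¹ ∂p ≤ 1 ∧
      (c = 0 ∨ ∫⁻ x, (ENNReal.ofReal (g x + c))⁻¹ ∂p = 1) := by
  by_cases hW0 : ∫⁻ x, (ENNReal.ofReal (g x))⁻¹ ∂p ≤ 1
  · exact ⟨0, le_rfl, by simpa using hW0, Or.inl rfl⟩
  obtain ⟨n, hn⟩ :=
    ((tendsto_lintegral_inv_add_one_div hg).eventually (lt_mem_nhds (not_le.1 hW0))).exists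
  set a : ℝ := 1 / (n + 1)
  have ha : 0 < a := by positivity
  have ha1 : a ≤ 1 := by simpa [a] using Nat.one_div_le_one_div (α := ℝ) (Nat.zero_le n)
  have hWa : 1 ≤ ∫ x, (g x + a)⁻¹ ∂p := by
    rw [lintegral_inv_add_eq_ofReal_integral hg hg0 ha] at hn
    exact (ENNReal.one_lt_ofReal.1 hn).le
  have hW1 : ∫ x, (g x + 1)⁻¹ ∂p ≤ 1 := by
    refine ENNReal.ofReal_le_one.1 ?_
    rw [← lintegral_inv_add_eq_ofReal_integral hg hg0 one_pos]
    calc ∫⁻ x, (ENNReal.ofReal (g x + 1))⁻¹ ∂p ≤ ∫⁻ _, 1 ∂p :=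
          lintegral_mono fun x ↦
            ENNReal.inv_le_one.2 (ENNReal.one_le_ofReal.2 (by linarith [hg0 x]))
      _ = 1 := by simp
  obtain ⟨c, hc, hWc : ∫ x, (g x + c)⁻¹ ∂p = 1⟩ := intermediate_value_Icc' ha1
    ((continuousOn_integral_inv_add hg hg0 ha).mono Icc_subset_Ici_self) ⟨hW1, hWa⟩
  have hc0 : 0 < c := ha.trans_le hc.1
  have : ∫⁻ x, (ENNReal.ofReal (g x + c))⁻¹ ∂p = 1 := by
    rw [lintegral_inv_add_eq_ofReal_integral hg hg0 hc0, hWc, ENNReal.ofReal_one]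
  exact ⟨c, hc0.le, this.le, Or.inr this⟩

lemma exists_add_lintegral_inv_le_one [IsProbabilityMeasure p] (hg : Measurable g) {x₀ : X}
    (hx₀ : ∀ x, g x₀ ≤ g x) :
    ∃ c, (∀ x, 0 ≤ g x + c) ∧ ∫⁻ x, (ENNReal.ofReal (g x + c))⁻¹ ∂p ≤ 1 ∧
      (g x₀ + c = 0 ∨ ∫⁻ x, (ENNReal.ofReal (g x + c))⁻¹ ∂p = 1) := by
  obtain ⟨c, hc0, hZ, hc⟩ :=
    exists_lintegral_inv_add_le_one (p := p) (hg.sub_const (g x₀)) fun x ↦ sub_nonneg.2 (hx₀ x)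
  have hshift : ∀ x, g x + (c - g x₀) = g x - g x₀ + c := fun x ↦ by ring
  refine ⟨c - g x₀, fun x ↦ by linarith [hx₀ x], ?_, ?_⟩
  · simpa only [hshift] using hZ
  · simpa only [hshift, sub_self, zero_add] using hc

end Shift

end MeasureTheory

lemma klDiv_add_le_klDiv_add {X : Type*} [MeasurableSpace X] {p μ ν : Measure X} {a b : ℝ}
    (hpν : p ≪ ν) (hllr : Integrable (llr p ν) p)
    (hle : p ≪ μ → Integrable (llr p μ) p →
      ∫ x, llr p ν x ∂p + a ≤ ∫ x, llr p μ x ∂p + b) :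
    klDiv p ν + (a : EReal) ≤ klDiv p μ + (b : EReal) := by
  rw [klDiv, if_pos ⟨hpν, hllr⟩, klDiv]
  split_ifs with hμ
  · exact_mod_cast hle hμ.1 hμ.2
  · simp

theorem stmt_13_general (X : Type*) [MetricSpace X] [CompactSpace X]
    [MeasurableSpace X] [BorelSpace X]
    (pd : Measure X) [IsProbabilityMeasure pd]
    (Ef : X → ℝ) (hEf : Continuous Ef)
    (lam : ℝ)
    (F : Measure X → EReal)
    (hF : ∀ μ : Measure X,
      F μ = klDiv pd μ + ((lam * ∫ x, Ef x ∂μ : ℝ) : EReal)) :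
    ∃ μstar : Measure X, IsProbabilityMeasure μstar ∧
      ∀ μ : Measure X, IsProbabilityMeasure μ → F μstar ≤ F μ := by
  have := nonempty_of_isProbabilityMeasure pd
  obtain ⟨x₀, -, hmin⟩ :=
    isCompact_univ.exists_isMinOn univ_nonempty (continuous_const.mul hEf).continuousOn
  obtain ⟨c, h0, hZ, hx₀⟩ := exists_add_lintegral_inv_le_one (p := pd)
    (g := fun x ↦ lam * Ef x) (by fun_prop) fun x ↦ hmin (mem_univ x)
  set h : X → ℝ := fun x ↦ lam * Ef x + c
  have hcont : Continuous h := by fun_prop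
  have hint : ∀ μ : Measure X, IsFiniteMeasure μ → Integrable h μ := fun μ _ ↦
    hcont.integrable_of_hasCompactSupport (.of_compactSpace h)
  have hlin : ∀ μ : Measure X, IsProbabilityMeasure μ →
      ∫ x, h x ∂μ = lam * ∫ x, Ef x ∂μ + c := fun μ _ ↦ by
    have hEf_int : Integrable Ef μ := hEf.integrable_of_hasCompactSupport (.of_compactSpace Ef)
    rw [integral_add (hEf_int.const_mul lam) (integrable_const c), integral_const_mul]
    simp
  have hprob := isProbabilityMeasure_invDensityMeasure (x₀ := x₀) hZ
  refine ⟨invDensityMeasure pd h x₀, hprob, fun μ hμ ↦ ?_⟩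
  rw [hF, hF]
  refine klDiv_add_le_klDiv_add (absolutelyContinuous_invDensityMeasure hcont.measurable hZ hx₀)
    (integrable_llr_invDensityMeasure hcont.measurable h0 hZ hx₀ (hint pd inferInstance))
    fun hpμ hllr ↦ ?_
  have hopt := integral_llr_add_integral_invDensityMeasure_le hcont.measurable h0 hZ hx₀
    (hint pd inferInstance) hpμ hllr (hint μ inferInstance)
  linarith [hlin μ hμ, hlin _ hprob]

/-- Existence of a minimizer of the non-parametric Reg-DGM objective:
on a compact metric space `X`, the functional
`μ ↦ KL(p_d ‖ μ) + λ·∫_X E_f dμ` over Borel probability measures on `X`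
attains its infimum. -/
theorem stmt_13 (X : Type*) [MetricSpace X] [CompactSpace X]
    [MeasurableSpace X] [BorelSpace X]
    (pd : Measure X) [IsProbabilityMeasure pd]
    (Ef : X → ℝ) (hEf : Continuous Ef)
    (lam : ℝ) (hlam : 0 < lam)
    (F : Measure X → EReal)
    (hF : ∀ μ : Measure X,
      F μ = klDiv pd μ + ((lam * ∫ x, Ef x ∂μ : ℝ) : EReal)) :
    ∃ μstar : Measure X, IsProbabilityMeasure μstar ∧
      ∀ μ : Measure X, IsProbabilityMeasure μ → F μstar ≤ F μ :=
  stmt_13_general X pd Ef hEf lam F hF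
end

section
/- Let X ⊆ ℝⁿ be a nonempty compact set, let p_d be a bounded probability density on X, and let E_f : X → ℝ be continuous and bounded, with M = sup_{x∈X} E_f(x) and m₀ = inf_{x∈X} E_f(x). Suppose for each λ > 0 there exists α_λ ∈ ℝ such that p_λ(x) = p_d(x)/(α_λ + λ·E_f(x)) is a probability density on X (in particular α_λ + λ·E_f(x) > 0 on the support of p_d and ∫_X p_λ = 1). Then 1 − λ·M ≤ α_λ ≤ 1 − λ·m₀ for every such λ; consequently α_λ → 1 as λ → 0⁺, and ∫_X |p_λ(x) − p_d(x)| dx → 0 as λ → 0⁺. -/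
/-!
If `x ↦ p x / d x` is again a probability density and `c ≤ d ≤ c'` on the support of `p`,
then integrating `p / c' ≤ p / d ≤ p / c` against the normalisations gives `c ≤ 1 ≤ c'`.
For `d = α_λ + λ E_f` this pins `α_λ` between `1 - λ M` and `1 - λ m₀`, so `d` is uniformly
`λ (M - m₀)`-close to `1` on `X`, and `|p / d - p| = p |1 - d| / d ≤ 2 λ (M - m₀) p`
once `λ (M - m₀) ≤ 1/2`. Integrating, `‖p_λ - p_d‖₁ ≤ 2 λ (M - m₀) → 0`.
-/

open MeasureTheory Filter Topology

section Reweighting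

variable {Ω : Type*} [MeasurableSpace Ω] {μ : Measure Ω} {p d : Ω → ℝ} {c : ℝ}

theorem frequently_ne_zero_of_integral_eq_one (hp1 : ∫ x, p x ∂μ = 1) :
    ∃ᵐ x ∂μ, p x ≠ 0 := fun h => by
  have : ∫ x, p x ∂μ = 0 := integral_eq_zero_of_ae (h.mono fun _ hx => not_not.mp hx)
  exact zero_ne_one (this.symm.trans hp1)

theorem one_le_of_integral_div_eq_one (hp : ∀ᵐ x ∂μ, 0 ≤ p x) (hp1 : ∫ x, p x ∂μ = 1)
    (hd : ∀ᵐ x ∂μ, p x ≠ 0 → 0 < d x) (hdc : ∀ᵐ x ∂μ, d x ≤ c)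
    (hpd : ∫ x, p x / d x ∂μ = 1) : 1 ≤ c := by
  have hc : 0 < c := by
    obtain ⟨x, hpx, hdx, hdcx⟩ :=
      ((frequently_ne_zero_of_integral_eq_one hp1).and_eventually (hd.and hdc)).exists
    exact (hdx hpx).trans_le hdcx
  have hle : ∫ x, p x / c ∂μ ≤ ∫ x, p x / d x ∂μ := by
    refine integral_mono_ae ((integrable_of_integral_eq_one hp1).div_const c)
      (integrable_of_integral_eq_one hpd) ?_
    filter_upwards [hp, hd, hdc] with x hpx hdx hdcx
    rcases eq_or_ne (p x) 0 with h0 | h0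
    · simp [h0]
    · exact div_le_div_of_nonneg_left hpx (hdx h0) hdcx
  rw [integral_div, hp1, hpd] at hle
  exact (div_le_one hc).mp hle

theorem le_one_of_integral_div_eq_one (hp : ∀ᵐ x ∂μ, 0 ≤ p x) (hp1 : ∫ x, p x ∂μ = 1)
    (hcd : ∀ᵐ x ∂μ, c ≤ d x) (hpd : ∫ x, p x / d x ∂μ = 1) : c ≤ 1 := by
  rcases le_or_gt c 0 with hc | hc
  · linarith
  have hle : ∫ x, p x / d x ∂μ ≤ ∫ x, p x / c ∂μ := by
    refine integral_mono_of_nonneg ?_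
      ((integrable_of_integral_eq_one hp1).div_const c) ?_
    · filter_upwards [hp, hcd] with x hpx hcdx
      exact div_nonneg hpx (hc.le.trans hcdx)
    · filter_upwards [hp, hcd] with x hpx hcdx
      exact div_le_div_of_nonneg_left hpx hc hcdx
  rw [integral_div, hp1, hpd] at hle
  exact (one_le_div hc).mp hle

theorem abs_div_sub_self_le {a b ε : ℝ} (ha : 0 ≤ a) (hb : |b - 1| ≤ ε) (hε : ε ≤ 1 / 2) :
    |a / b - a| ≤ 2 * ε * a := by
  have hb' : 1 / 2 ≤ b := by linarith [neg_abs_le (b - 1)]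
  have hb0 : 0 < b := by linarith
  have haε : 0 ≤ a * ε := mul_nonneg ha ((abs_nonneg _).trans hb)
  calc |a / b - a| = a * |b - 1| / b := by
        rw [show a / b - a = -(a * (b - 1) / b) by field_simp; ring, abs_neg, abs_div,
          abs_mul, abs_of_nonneg ha, abs_of_pos hb0]
    _ ≤ a * ε / (1 / 2) := by gcongr
    _ = 2 * ε * a := by ring

theorem integral_abs_div_sub_self_le {ε : ℝ} (hp : ∀ᵐ x ∂μ, 0 ≤ p x) (hp1 : ∫ x, p x ∂μ = 1)
    (hd : ∀ᵐ x ∂μ, p x ≠ 0 → |d x - 1| ≤ ε) (hε : ε ≤ 1 / 2) :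
    ∫ x, |p x / d x - p x| ∂μ ≤ 2 * ε := by
  calc ∫ x, |p x / d x - p x| ∂μ ≤ ∫ x, 2 * ε * p x ∂μ := by
        refine integral_mono_of_nonneg (Eventually.of_forall fun _ => abs_nonneg _)
          ((integrable_of_integral_eq_one hp1).const_mul _) ?_
        filter_upwards [hp, hd] with x hpx hdx
        rcases eq_or_ne (p x) 0 with h0 | h0
        · simp [h0]
        · exact abs_div_sub_self_le hpx (hdx h0) hε
    _ = 2 * ε := by rw [integral_const_mul, hp1, mul_one]

end Reweighting

theorem abs_add_mul_sub_one_le {a t e m M : ℝ} (ht : 0 ≤ t) (haM : 1 - t * M ≤ a)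
    (ham : a ≤ 1 - t * m) (hme : m ≤ e) (heM : e ≤ M) : |a + t * e - 1| ≤ t * (M - m) := by
  have hm := mul_le_mul_of_nonneg_left hme ht
  have hM := mul_le_mul_of_nonneg_left heM ht
  rw [abs_le]
  constructor <;> linarith

theorem tendsto_one_sub_mul_nhdsGT_zero (c : ℝ) :
    Tendsto (fun lam : ℝ => 1 - lam * c) (𝓝[>] 0) (𝓝 1) :=
  tendsto_nhdsWithin_of_tendsto_nhds <|
    (by fun_prop : Continuous fun lam : ℝ => 1 - lam * c).tendsto' 0 1 (by simp)

theorem stmt_14_general (n : ℕ) (X : Set (Fin n → ℝ))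
    (hXc : IsCompact X) (hXmeas : MeasurableSet X)
    (pd : (Fin n → ℝ) → ℝ)
    (hpd_nonneg : ∀ x, 0 ≤ pd x) (hpd_int : ∫ x in X, pd x = 1)
    (Ef : (Fin n → ℝ) → ℝ) (hEf_cont : ContinuousOn Ef X)
    (M m₀ : ℝ) (hM : M = sSup (Ef '' X)) (hm₀ : m₀ = sInf (Ef '' X))
    (α : ℝ → ℝ)
    (hpos : ∀ lam : ℝ, 0 < lam →
      ∀ x ∈ X, pd x ≠ 0 → 0 < α lam + lam * Ef x)
    (hnorm : ∀ lam : ℝ, 0 < lam →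
      ∫ x in X, pd x / (α lam + lam * Ef x) = 1) :
    (∀ lam : ℝ, 0 < lam →
      1 - lam * M ≤ α lam ∧ α lam ≤ 1 - lam * m₀) ∧
    Tendsto α (nhdsWithin 0 (Set.Ioi 0)) (nhds 1) ∧
    Tendsto (fun lam : ℝ =>
        ∫ x in X, |pd x / (α lam + lam * Ef x) - pd x|)
      (nhdsWithin 0 (Set.Ioi 0)) (nhds 0) := by
  have hEf_img : IsCompact (Ef '' X) := hXc.image_of_continuousOn hEf_cont
  have hEf : ∀ x ∈ X, m₀ ≤ Ef x ∧ Ef x ≤ M := fun x hx =>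
    ⟨hm₀ ▸ csInf_le hEf_img.bddBelow ⟨x, hx, rfl⟩, hM ▸ le_csSup hEf_img.bddAbove ⟨x, hx, rfl⟩⟩
  have hpd_ae : ∀ᵐ x ∂volume.restrict X, 0 ≤ pd x := Eventually.of_forall hpd_nonneg
  have hα : ∀ lam : ℝ, 0 < lam → 1 - lam * M ≤ α lam ∧ α lam ≤ 1 - lam * m₀ := by
    intro lam hlam
    have hupper := one_le_of_integral_div_eq_one (c := α lam + lam * M) hpd_ae hpd_int
      (ae_restrict_of_forall_mem hXmeas (hpos lam hlam))
      (ae_restrict_of_forall_mem hXmeas fun x hx =>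
        add_le_add_right (mul_le_mul_of_nonneg_left (hEf x hx).2 hlam.le) _)
      (hnorm lam hlam)
    have hlower := le_one_of_integral_div_eq_one (c := α lam + lam * m₀) hpd_ae hpd_int
      (ae_restrict_of_forall_mem hXmeas fun x hx =>
        add_le_add_right (mul_le_mul_of_nonneg_left (hEf x hx).1 hlam.le) _)
      (hnorm lam hlam)
    constructor <;> linarith
  refine ⟨hα, tendsto_of_tendsto_of_tendsto_of_le_of_le' (tendsto_one_sub_mul_nhdsGT_zero M)
    (tendsto_one_sub_mul_nhdsGT_zero m₀) (eventually_nhdsWithin_of_forall fun lam hlam =>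
      (hα lam hlam).1) (eventually_nhdsWithin_of_forall fun lam hlam => (hα lam hlam).2), ?_⟩
  have hε : Tendsto (fun lam : ℝ => lam * (M - m₀)) (𝓝[>] 0) (𝓝 0) :=
    tendsto_nhdsWithin_of_tendsto_nhds <|
      (by fun_prop : Continuous fun lam : ℝ => lam * (M - m₀)).tendsto' 0 0 (by simp)
  refine squeeze_zero' (Eventually.of_forall fun _ => integral_nonneg fun _ => abs_nonneg _) ?_
    (by simpa using hε.const_mul 2)
  filter_upwards [hε.eventually_lt_const (by norm_num : (0 : ℝ) < 1 / 2), self_mem_nhdsWithin]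
    with lam hsmall hlam
  refine integral_abs_div_sub_self_le hpd_ae hpd_int
    (ae_restrict_of_forall_mem hXmeas fun x hx _ => ?_) hsmall.le
  exact abs_add_mul_sub_one_le (le_of_lt hlam) (hα lam hlam).1 (hα lam hlam).2 (hEf x hx).1
    (hEf x hx).2

/-- Consistency of the non-parametric Reg-DGM solution as `λ → 0⁺`: if for each
`λ > 0` the reweighted density `p_λ(x) = p_d(x)/(α_λ + λ·E_f(x))` is a
probability density on the compact set `X` (denominator positive on the support
of `p_d` and `∫_X p_λ = 1`), then `1 − λ·M ≤ α_λ ≤ 1 − λ·m₀` where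
`M = sup_X E_f` and `m₀ = inf_X E_f`; consequently `α_λ → 1` and
`∫_X |p_λ − p_d| → 0` as `λ → 0⁺`. -/
theorem stmt_14 (n : ℕ) (X : Set (Fin n → ℝ))
    (hXne : X.Nonempty) (hXc : IsCompact X) (hXmeas : MeasurableSet X)
    (pd : (Fin n → ℝ) → ℝ) (hpd_meas : Measurable pd)
    (hpd_nonneg : ∀ x, 0 ≤ pd x) (hpd_int : ∫ x in X, pd x = 1)
    (hpd_bdd : ∃ C : ℝ, ∀ x ∈ X, pd x ≤ C)
    (Ef : (Fin n → ℝ) → ℝ) (hEf_cont : ContinuousOn Ef X)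
    (M m₀ : ℝ) (hM : M = sSup (Ef '' X)) (hm₀ : m₀ = sInf (Ef '' X))
    (α : ℝ → ℝ)
    (hpos : ∀ lam : ℝ, 0 < lam →
      ∀ x ∈ X, pd x ≠ 0 → 0 < α lam + lam * Ef x)
    (hnorm : ∀ lam : ℝ, 0 < lam →
      ∫ x in X, pd x / (α lam + lam * Ef x) = 1) :
    (∀ lam : ℝ, 0 < lam →
      1 - lam * M ≤ α lam ∧ α lam ≤ 1 - lam * m₀) ∧
    Tendsto α (nhdsWithin 0 (Set.Ioi 0)) (nhds 1) ∧
    Tendsto (fun lam : ℝ =>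
        ∫ x in X, |pd x / (α lam + lam * Ef x) - pd x|)
      (nhdsWithin 0 (Set.Ioi 0)) (nhds 0) :=
  stmt_14_general n X hXc hXmeas pd hpd_nonneg hpd_int Ef hEf_cont M m₀ hM hm₀ α hpos hnorm
end
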